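/- Let F be a one-dimensional cellular automaton on A^{Z} with local map f : A^{2r+1} → A, and let F̄ be its extension to dimension 2, the CA on A^{Z^2} defined by F̄(x)_{(i,j)} = f(x_{(i,j-r)}, x_{(i,j-r+1)}, …, x_{(i,j+r)}). Then ER(A^{Z^2}, F̄) = 2 · h(A^{Z}, F), where h(A^{Z}, F) is the topological entropy of the one-dimensional CA F. -/

import Mathlib

abbrev Config (A : Type*) : Type _ := ℤ × ℤ → A

/-- The shift by `v`: `(shift v x) u = x (u + v)`. -/
def shift {A : Type*} (v : ℤ × ℤ) (x : Config A) : Config A := fun u => x (u + v)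

/-- The square `E_n = {(i,j) : |i|,|j| ≤ n}`. -/
noncomputable def Esq (n : ℕ) : Finset (ℤ × ℤ) := Finset.Icc (-(n : ℤ), -(n : ℤ)) ((n : ℤ), (n : ℤ))

/-- The band `E'_n = E_n \ E_{n-r}` (outer band of `E_n` of width `r`). -/
noncomputable def Eband (r n : ℕ) : Finset (ℤ × ℤ) := Esq n \ Esq (n - r)

/-- `F` is a cellular automaton of radius `r`: it commutes with all shifts and
its value at the origin only depends on the coordinates in `E_r`. -/
def IsCA {A : Type*} (F : Config A → Config A) (r : ℕ) : Prop :=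
  (∀ v x, F (shift v x) = shift v (F x)) ∧
    ∀ x y : Config A, (∀ u ∈ Esq r, x u = y u) → F x (0, 0) = F y (0, 0)

/-- Shannon entropy `H_μ` of the finite partition given by the fibers of `p`. -/
noncomputable def partEnt {X : Type*} [MeasurableSpace X] (μ : MeasureTheory.Measure X)
    {ι : Type*} [Fintype ι] (p : X → ι) : ℝ :=
  ∑ i : ι, Real.negMulLog ((μ (p ⁻¹' {i})).toReal)

/-- Kolmogorov–Sinai entropy `h_μ(P,F)` of the partition `p` with respect to `F`:
the limit of `H_μ(⋁_{i=0}^{N-1} F^{-i} P)/N`. -/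
noncomputable def ksEnt {X : Type*} [MeasurableSpace X] (μ : MeasureTheory.Measure X)
    (F : X → X) {ι : Type*} [Fintype ι] (p : X → ι) : ℝ :=
  Filter.atTop.limsup fun N : ℕ =>
    partEnt μ (fun x => fun i : Fin N => p (F^[(i : ℕ)] x)) / (N : ℝ)

/-- The partition `P_n = ⋁_{v ∈ E_n} σ^v(P)`. -/
def sqJoin {A ι : Type*} (p : Config A → ι) (n : ℕ) :
    Config A → ({v : ℤ × ℤ // v ∈ Esq n} → ι) :=
  fun x v => p (shift v.1 x)

/-- The partition `P'_n = ⋁_{v ∈ E'_n} σ^v(P)`. -/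
def bandJoin {A ι : Type*} (p : Config A → ι) (r n : ℕ) :
    Config A → ({v : ℤ × ℤ // v ∈ Eband r n} → ι) :=
  fun x v => p (shift v.1 x)

/-- The clopen partition `S_0` of `A^{ℤ²}` according to the coordinate `(0,0)`. -/
def p0 {A : Type*} : Config A → A := fun x => x (0, 0)

/-- The entropy rate `ER_μ(P,F) = limsup_n h_μ(P'_n,F)/n` of a partition `p`,
for a CA of radius `r`. -/
noncomputable def ERpart {A : Type*} [MeasurableSpace A] (μ : MeasureTheory.Measure (Config A))
    (F : Config A → Config A) {ι : Type*} [Fintype ι] (p : Config A → ι) (r : ℕ) : ℝ :=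
  Filter.atTop.limsup fun n : ℕ => ksEnt μ F (bandJoin p r n) / (n : ℝ)

/-- The entropy rate `ER_μ(A^{ℤ²},F)`: the supremum of `ER_μ(P,F)` over all
finite measurable partitions `P`. -/
noncomputable def ERsys {A : Type*} [MeasurableSpace A] (μ : MeasureTheory.Measure (Config A))
    (F : Config A → Config A) (r : ℕ) : ℝ :=
  sSup {x : ℝ | ∃ (k : ℕ) (p : Config A → Fin (k + 1)),
    (∀ i, MeasurableSet (p ⁻¹' {i})) ∧ x = ERpart μ F p r}

/-- `N(C)`: the smallest cardinality of a finite subcover of `C`. -/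
noncomputable def coverNum {X ι : Type*} [Fintype ι] (C : ι → Set X) : ℕ :=
  sInf {m : ℕ | ∃ s : Finset ι, s.card = m ∧ (⋃ i ∈ s, C i) = Set.univ}

/-- Topological entropy `h(C,F)` of an open cover `C` with respect to `F`:
the limit of `log N(⋁_{i=0}^{N-1} F^{-i} C)/N`. -/
noncomputable def covEnt {X ι : Type*} [Fintype ι] (F : X → X) (C : ι → Set X) : ℝ :=
  Filter.atTop.limsup fun N : ℕ =>
    Real.log ((coverNum fun g : Fin N → ι => ⋂ i : Fin N, (F^[(i : ℕ)]) ⁻¹' C (g i) : ℕ) : ℝ) /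
      (N : ℝ)

/-- The cover `C'_n = ⋁_{v ∈ E'_n} σ^v(C)`. -/
def covBand {A ι : Type*} (C : ι → Set (Config A)) (r n : ℕ) :
    ({v : ℤ × ℤ // v ∈ Eband r n} → ι) → Set (Config A) :=
  fun g => ⋂ v : {v : ℤ × ℤ // v ∈ Eband r n}, shift v.1 ⁻¹' C (g v)

/-- The cover `C_n = ⋁_{v ∈ E_n} σ^v(C)`. -/
def covSq {A ι : Type*} (C : ι → Set (Config A)) (n : ℕ) :
    ({v : ℤ × ℤ // v ∈ Esq n} → ι) → Set (Config A) :=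
  fun g => ⋂ v : {v : ℤ × ℤ // v ∈ Esq n}, shift v.1 ⁻¹' C (g v)

/-- Topological entropy rate `ER(C,F) = limsup_n h(C'_n,F)/n` of a cover `C`,
for a CA of radius `r`. -/
noncomputable def ERcov {A ι : Type*} [Fintype ι] (F : Config A → Config A)
    (C : ι → Set (Config A)) (r : ℕ) : ℝ :=
  Filter.atTop.limsup fun n : ℕ => covEnt F (covBand C r n) / (n : ℝ)

/-- The clopen cover `S_0` of `A^{ℤ²}` by the value of the coordinate `(0,0)`. -/
def S0cov {A : Type*} : A → Set (Config A) := fun a => {x | x (0, 0) = a}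

/-- Topological entropy rate `ER(A^{ℤ²},F)`: the supremum of `ER(C,F)` over all
finite open covers `C`. -/
noncomputable def ERtop {A : Type*} [TopologicalSpace A] (F : Config A → Config A) (r : ℕ) : ℝ :=
  sSup {x : ℝ | ∃ (m : ℕ) (C : Fin (m + 1) → Set (Config A)),
    (∀ i, IsOpen (C i)) ∧ (⋃ i, C i) = Set.univ ∧ x = ERcov F C r}

abbrev Config1 (A : Type*) : Type _ := ℤ → A

/-- The topological entropy `h(A^ℤ,F)`: the supremum of `h(C,F)` over all finite
open covers `C` of `A^ℤ`. -/
noncomputable def topEnt1 {A : Type*} [TopologicalSpace A]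
    (F : Config1 A → Config1 A) : ℝ :=
  sSup {x : ℝ | ∃ (m : ℕ) (C : Fin (m + 1) → Set (Config1 A)),
    (∀ i, IsOpen (C i)) ∧ (⋃ i, C i) = Set.univ ∧ x = covEnt F C}


/-! ### Auxiliary toolkit -/

namespace EntropyAux

open Filter Set

/-! #### limsup toolkit -/

lemma limsup_le_of_le_tendsto {u v : ℕ → ℝ} {a : ℝ} (h0 : ∀ n, 0 ≤ u n)
    (h : ∀ᶠ n in atTop, u n ≤ v n) (hv : Tendsto v atTop (nhds a)) :
    atTop.limsup u ≤ a := by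
  have hcob : Filter.IsCoboundedUnder (· ≤ ·) atTop u :=
    (Filter.isBoundedUnder_of ⟨0, fun n => h0 n⟩ :
      Filter.IsBoundedUnder (· ≥ ·) atTop u).isCoboundedUnder_le
  have := Filter.limsup_le_limsup h hcob hv.isBoundedUnder_le
  rwa [hv.limsup_eq] at this

lemma le_limsup_of_tendsto_le {u v : ℕ → ℝ} {a B : ℝ} (hB : ∀ n, u n ≤ B)
    (h : ∀ᶠ n in atTop, v n ≤ u n) (hv : Tendsto v atTop (nhds a)) :
    a ≤ atTop.limsup u := by
  have hcob : Filter.IsCoboundedUnder (· ≤ ·) atTop v :=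
    (hv.isBoundedUnder_ge).isCoboundedUnder_le
  have hbu : Filter.IsBoundedUnder (· ≤ ·) atTop u :=
    Filter.isBoundedUnder_of ⟨B, fun n => hB n⟩
  have := Filter.limsup_le_limsup h hcob hbu
  rwa [hv.limsup_eq] at this

lemma limsup_cmul {u : ℕ → ℝ} {c B : ℝ} (hc : 0 ≤ c) (h0 : ∀ n, 0 ≤ u n)
    (hB : ∀ n, u n ≤ B) :
    atTop.limsup (fun n => c * u n) = c * atTop.limsup u := by
  rcases eq_or_lt_of_le hc with hc0 | hcpos
  · simp [← hc0]
  · have hb1 : Filter.IsBoundedUnder (· ≤ ·) atTop u :=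
      Filter.isBoundedUnder_of ⟨B, fun n => hB n⟩
    have hcb1 : Filter.IsCoboundedUnder (· ≤ ·) atTop u :=
      (Filter.isBoundedUnder_of ⟨0, fun n => h0 n⟩ :
        Filter.IsBoundedUnder (· ≥ ·) atTop u).isCoboundedUnder_le
    have hb2 : Filter.IsBoundedUnder (· ≤ ·) atTop (fun n => c * u n) :=
      Filter.isBoundedUnder_of ⟨c * B, fun n => by
        exact mul_le_mul_of_nonneg_left (hB n) hc⟩
    have hcb2 : Filter.IsCoboundedUnder (· ≤ ·) atTop (fun n => c * u n) :=
      (Filter.isBoundedUnder_of ⟨0, fun n => mul_nonneg hc (h0 n)⟩ :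
        Filter.IsBoundedUnder (· ≥ ·) atTop (fun n => c * u n)).isCoboundedUnder_le
    exact ((OrderIso.mulLeft₀ c hcpos).limsup_apply hb1 hcb1 hb2 hcb2).symm

/-! #### coverNum and partitions -/

variable {X : Type*} {ι κ J : Type*}

lemma coverNum_le_card [Fintype ι] (C : ι → Set X) (s : Finset ι)
    (hs : (⋃ i ∈ s, C i) = univ) : coverNum C ≤ s.card :=
  Nat.sInf_le ⟨s, rfl, hs⟩

lemma exists_min_subcover [Fintype ι] (C : ι → Set X) (hC : (⋃ i, C i) = univ) :
    ∃ s : Finset ι, s.card = coverNum C ∧ (⋃ i ∈ s, C i) = univ := by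
  have hne : {m : ℕ | ∃ s : Finset ι, s.card = m ∧ (⋃ i ∈ s, C i) = univ}.Nonempty :=
    ⟨Finset.univ.card, Finset.univ, rfl, by simpa using hC⟩
  exact Nat.sInf_mem hne

lemma coverNum_le_of_refine [Fintype ι] [Fintype κ] {C : ι → Set X} {D : κ → Set X}
    (hC : (⋃ i, C i) = univ) (h : ∀ i, ∃ j, C i ⊆ D j) :
    coverNum D ≤ coverNum C := by
  classical
  obtain ⟨s, hcard, hcov⟩ := exists_min_subcover C hC
  choose φ hφ using h
  refine le_trans (coverNum_le_card D (s.image φ) ?_) (by rw [← hcard]; exact Finset.card_image_le)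
  apply eq_univ_iff_forall.2
  intro x
  have hx : x ∈ ⋃ i ∈ s, C i := hcov ▸ mem_univ x
  simp only [mem_iUnion] at hx ⊢
  obtain ⟨i, his, hxi⟩ := hx
  exact ⟨φ i, Finset.mem_image_of_mem φ his, hφ i hxi⟩

/-- The partition of `X` into fibers of `q`. -/
def part (q : X → J) : J → Set X := fun j => q ⁻¹' {j}

lemma part_cover (q : X → J) : (⋃ j, part q j) = univ := by
  apply eq_univ_iff_forall.2
  intro x; exact mem_iUnion.2 ⟨q x, rfl⟩

lemma coverNum_part_eq [Fintype J] (q : X → J) :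
    coverNum (part q) = (Set.range q).ncard := by
  classical
  have hfin : (Set.range q).Finite := Set.toFinite _
  refine le_antisymm ?_ ?_
  · refine le_trans (coverNum_le_card (part q) hfin.toFinset ?_) ?_
    · apply eq_univ_iff_forall.2
      intro x
      simp only [mem_iUnion]
      exact ⟨q x, by simp [hfin.mem_toFinset], rfl⟩
    · rw [Set.ncard_eq_toFinset_card']
      apply le_of_eq
      congr 1
      simp [Set.Finite.toFinset]
  · obtain ⟨s, hcard, hcov⟩ := exists_min_subcover (part q) (part_cover q)
    rw [← hcard]
    have hsub : hfin.toFinset ⊆ s := by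
      intro j hj
      rw [hfin.mem_toFinset] at hj
      obtain ⟨x, rfl⟩ := hj
      have hx : x ∈ ⋃ i ∈ s, part q i := hcov ▸ mem_univ x
      simp only [mem_iUnion] at hx
      obtain ⟨i, his, hxi⟩ := hx
      have : q x = i := hxi
      rwa [this]
    calc (Set.range q).ncard = hfin.toFinset.card := by
          rw [Set.ncard_eq_toFinset_card']; congr 1; simp [Set.Finite.toFinset]
      _ ≤ s.card := Finset.card_le_card hsub

end EntropyAux

namespace EntropyAux
open Filter Set

section CovEnt
variable {X ι κ J α β γ : Type*}

lemma log_nat_mono {m k : ℕ} (h : m ≤ k) : Real.log m ≤ Real.log k := by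
  rcases Nat.eq_zero_or_pos m with hm | hm
  · subst hm; simpa using Real.log_natCast_nonneg k
  · exact Real.log_le_log (by exact_mod_cast hm) (by exact_mod_cast h)

/-- The join `⋁_{i<N} F^{-i} C`. -/
def timeJoin (F : X → X) [Fintype ι] (C : ι → Set X) (N : ℕ) : (Fin N → ι) → Set X :=
  fun g => ⋂ i : Fin N, (F^[(i : ℕ)]) ⁻¹' C (g i)

/-- The sequence whose limsup is `covEnt`. -/
noncomputable def entSeq (F : X → X) [Fintype ι] (C : ι → Set X) (N : ℕ) : ℝ :=
  Real.log (coverNum (timeJoin F C N)) / N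

lemma covEnt_eq_limsup (F : X → X) [Fintype ι] (C : ι → Set X) :
    covEnt F C = atTop.limsup (entSeq F C) := rfl

lemma timeJoin_covers (F : X → X) [Fintype ι] {C : ι → Set X}
    (hC : (⋃ i, C i) = univ) (N : ℕ) : (⋃ g, timeJoin F C N g) = univ := by
  apply eq_univ_iff_forall.2
  intro x
  have h : ∀ i : Fin N, ∃ j, F^[(i : ℕ)] x ∈ C j := by
    intro i
    have := hC ▸ mem_univ (F^[(i : ℕ)] x)
    simpa [mem_iUnion] using this
  choose g hg using h
  exact mem_iUnion.2 ⟨g, mem_iInter.2 fun i => hg i⟩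

lemma entSeq_nonneg (F : X → X) [Fintype ι] (C : ι → Set X) (N : ℕ) :
    0 ≤ entSeq F C N :=
  div_nonneg (Real.log_natCast_nonneg _) (Nat.cast_nonneg _)

lemma entSeq_le_log_card (F : X → X) [Fintype ι] {C : ι → Set X}
    (hC : (⋃ i, C i) = univ) (N : ℕ) :
    entSeq F C N ≤ Real.log (Fintype.card ι) := by
  classical
  rcases Nat.eq_zero_or_pos N with hN | hN
  · subst hN; simpa [entSeq] using Real.log_natCast_nonneg (Fintype.card ι)
  · have h1 : coverNum (timeJoin F C N) ≤ Fintype.card ι ^ N := by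
      refine le_trans (coverNum_le_card _ Finset.univ ?_) ?_
      · simpa using timeJoin_covers F hC N
      · simp [Finset.card_univ]
    have h2 : Real.log (coverNum (timeJoin F C N)) ≤ N * Real.log (Fintype.card ι) := by
      refine le_trans (log_nat_mono h1) ?_
      rw [Nat.cast_pow, Real.log_pow]
    rw [entSeq, div_le_iff₀ (by exact_mod_cast hN : (0:ℝ) < N)]
    linarith [h2]

lemma covEnt_nonneg (F : X → X) [Fintype ι] {C : ι → Set X}
    (hC : (⋃ i, C i) = univ) : 0 ≤ covEnt F C :=
  le_limsup_of_tendsto_le (entSeq_le_log_card F hC)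
    (Eventually.of_forall (entSeq_nonneg F C)) tendsto_const_nhds

lemma covEnt_mono (F : X → X) [Fintype ι] [Fintype κ] {C : ι → Set X} {D : κ → Set X}
    (hC : (⋃ i, C i) = univ) (href : ∀ i, ∃ j, C i ⊆ D j) :
    covEnt F D ≤ covEnt F C := by
  rw [covEnt_eq_limsup, covEnt_eq_limsup]
  have key : ∀ N, entSeq F D N ≤ entSeq F C N := by
    intro N
    have hnum : coverNum (timeJoin F D N) ≤ coverNum (timeJoin F C N) := by
      apply coverNum_le_of_refine (timeJoin_covers F hC N)
      intro g
      choose φ hφ using href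
      exact ⟨fun i => φ (g i), Set.iInter_mono fun i => Set.preimage_mono (hφ (g i))⟩
    have hlog := log_nat_mono hnum
    rcases Nat.eq_zero_or_pos N with hN | hN
    · subst hN; simp [entSeq]
    · exact (div_le_div_iff_of_pos_right (by exact_mod_cast hN : (0:ℝ) < N)).2 hlog
  refine Filter.limsup_le_limsup (Eventually.of_forall key) ?_ ?_
  · exact (Filter.isBoundedUnder_of ⟨0, fun n => entSeq_nonneg F D n⟩ :
      Filter.IsBoundedUnder (· ≥ ·) atTop _).isCoboundedUnder_le
  · exact Filter.isBoundedUnder_of ⟨Real.log (Fintype.card ι), fun n => entSeq_le_log_card F hC n⟩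

lemma covEnt_congr (F : X → X) [Fintype ι] [Fintype κ] {C : ι → Set X} {D : κ → Set X}
    (hC : (⋃ i, C i) = univ) (hD : (⋃ j, D j) = univ)
    (h1 : ∀ i, ∃ j, C i ⊆ D j) (h2 : ∀ j, ∃ i, D j ⊆ C i) :
    covEnt F C = covEnt F D :=
  le_antisymm (covEnt_mono F hD h2) (covEnt_mono F hC h1)

end CovEnt
end EntropyAux

namespace EntropyAux
open Filter Set

section Itin
variable {X ι κ J α β γ : Type*}

/-- The itinerary map of a partition `q` under `F`. -/
def itin (F : X → X) (q : X → J) (N : ℕ) : X → (Fin N → J) :=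
  fun x i => q (F^[(i : ℕ)] x)

lemma timeJoin_part (F : X → X) [Fintype J] (q : X → J) (N : ℕ) :
    timeJoin F (part q) N = part (itin F q N) := by
  funext g
  ext x
  simp [timeJoin, part, itin, Set.mem_iInter, funext_iff]

lemma covEnt_part (F : X → X) [Fintype J] (q : X → J) :
    covEnt F (part q) =
      atTop.limsup fun N => Real.log ((Set.range (itin F q N)).ncard) / N := by
  rw [covEnt_eq_limsup]
  congr 1
  funext N
  rw [entSeq, show (timeJoin F (part q) N) = part (itin F q N) from timeJoin_part F q N,
    coverNum_part_eq]

lemma entSeq_part_eq (F : X → X) [Fintype J] (q : X → J) (N : ℕ) :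
    entSeq F (part q) N = Real.log ((Set.range (itin F q N)).ncard) / N := by
  rw [entSeq, show (timeJoin F (part q) N) = part (itin F q N) from timeJoin_part F q N,
    coverNum_part_eq]

lemma ncard_range_comp_le [Finite β] (g : α → β) (h : β → γ) :
    (Set.range (h ∘ g)).ncard ≤ (Set.range g).ncard := by
  rw [Set.range_comp]
  exact Set.ncard_image_le (Set.toFinite _)

lemma ncard_range_le_card [Fintype β] (g : α → β) :
    (Set.range g).ncard ≤ Fintype.card β := by
  simpa [Set.ncard_univ, Nat.card_eq_fintype_card] using
    Set.ncard_le_ncard (subset_univ (Set.range g)) (Set.toFinite _)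

lemma coverNum_const_univ [Fintype κ] [Nonempty κ] [Nonempty X] :
    coverNum (fun _ : κ => (univ : Set X)) = 1 := by
  classical
  apply le_antisymm
  · refine coverNum_le_card _ {Classical.arbitrary κ} (by simp)
      |>.trans (by simp)
  · rw [Nat.one_le_iff_ne_zero]
    intro h0
    obtain ⟨s, hcard, hcov⟩ := exists_min_subcover (fun _ : κ => (univ : Set X))
      (by rw [iUnion_const])
    rw [h0, Finset.card_eq_zero] at hcard
    subst hcard
    simp only [Finset.notMem_empty, iUnion_of_empty, iUnion_empty] at hcov
    exact (hcov ▸ mem_univ (Classical.arbitrary X) : (Classical.arbitrary X) ∈ (∅ : Set X))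

lemma covEnt_of_univ (F : X → X) [Fintype κ] [Nonempty κ] [Nonempty X] :
    covEnt F (fun _ : κ => (univ : Set X)) = 0 := by
  rw [covEnt_eq_limsup]
  have h : ∀ N, entSeq F (fun _ : κ => (univ : Set X)) N = 0 := by
    intro N
    have hjoin : timeJoin F (fun _ : κ => (univ : Set X)) N =
        fun _ : Fin N → κ => (univ : Set X) := by
      funext g; simp [timeJoin]
    rw [entSeq, hjoin, coverNum_const_univ]
    simp
  rw [show entSeq F (fun _ : κ => (univ : Set X)) = fun _ : ℕ => (0:ℝ) from funext h]
  exact Filter.limsup_const 0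

end Itin
end EntropyAux

namespace EntropyAux
open Filter Set

section Refine
variable {ι₀ : Type*} {A : Type*} [Fintype A] [TopologicalSpace A] [DiscreteTopology A]

/-- Restriction of a configuration to a finite window. -/
def restr (S : Finset ι₀) : (ι₀ → A) → ({j // j ∈ S} → A) := fun x j => x j.1

omit [Fintype A] in
lemma isOpen_part_restr (S : Finset ι₀) (jv : {j // j ∈ S} → A) :
    IsOpen (part (restr (A := A) S) jv) := by
  have h : part (restr (A := A) S) jv =
      ⋂ j : {j // j ∈ S}, (fun x : ι₀ → A => x j.1) ⁻¹' {jv j} := by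
    ext x
    simp [part, restr, funext_iff]
  rw [h]
  exact isOpen_iInter_of_finite fun j =>
    (continuous_apply _).isOpen_preimage _ (isOpen_discrete _)

lemma exists_refine (Sn : ℕ → Finset ι₀) (hmono : Monotone Sn)
    (hexh : ∀ j : ι₀, ∃ n, j ∈ Sn n) {m : ℕ} (C : Fin (m + 1) → Set (ι₀ → A))
    (hop : ∀ i, IsOpen (C i)) (hcov : (⋃ i, C i) = univ) :
    ∃ M, ∀ jv, ∃ i, part (restr (A := A) (Sn M)) jv ⊆ C i := by
  haveI : CompactSpace A := Finite.compactSpace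
  set U : ℕ → Set (ι₀ → A) :=
    fun n => {x | ∃ i, ∀ y : ι₀ → A, (∀ j ∈ Sn n, y j = x j) → y ∈ C i} with hU
  have hUopen : ∀ n, IsOpen (U n) := by
    intro n
    rw [isOpen_iff_forall_mem_open]
    rintro x ⟨i, hi⟩
    refine ⟨⋂ j : {j // j ∈ Sn n}, (fun y : ι₀ → A => y j.1) ⁻¹' {x j.1}, ?_, ?_, ?_⟩
    · intro y hy
      simp only [mem_iInter, mem_preimage, mem_singleton_iff] at hy
      exact ⟨i, fun z hz => hi z (fun j hj => (hz j hj).trans (hy ⟨j, hj⟩))⟩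
    · exact isOpen_iInter_of_finite fun j =>
        (continuous_apply _).isOpen_preimage _ (isOpen_discrete _)
    · simp only [mem_iInter, mem_preimage, mem_singleton_iff]
      exact fun _ => trivial
  have hUmono : ∀ {a b : ℕ}, a ≤ b → U a ⊆ U b := by
    intro a b hab x hx
    obtain ⟨i, hi⟩ := hx
    exact ⟨i, fun y hy => hi y fun j hj => hy j (hmono hab hj)⟩
  have hUcov : (univ : Set (ι₀ → A)) ⊆ ⋃ n, U n := by
    intro x _
    have hx : x ∈ ⋃ i, C i := hcov ▸ mem_univ x
    obtain ⟨i, hxi⟩ : ∃ i, x ∈ C i := by simpa [mem_iUnion] using hx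
    obtain ⟨I, u, h1, h2⟩ := isOpen_pi_iff.1 (hop i) x hxi
    choose g hg using hexh
    refine mem_iUnion.2 ⟨I.sup g, i, fun y hy => h2 ?_⟩
    intro j hj
    have hjSn : j ∈ Sn (I.sup g) := hmono (Finset.le_sup hj) (hg j)
    rw [hy j hjSn]
    exact (h1 j hj).2
  obtain ⟨t, ht⟩ := isCompact_univ.elim_finite_subcover U hUopen hUcov
  refine ⟨t.sup id, ?_⟩
  intro jv
  by_cases hne : ∃ x, restr (A := A) (Sn (t.sup id)) x = jv
  · obtain ⟨x, hx⟩ := hne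
    have hxU : x ∈ U (t.sup id) := by
      have := ht (mem_univ x)
      simp only [mem_iUnion] at this
      obtain ⟨n, hnt, hxn⟩ := this
      exact hUmono (Finset.le_sup (f := id) hnt) hxn
    obtain ⟨i, hi⟩ := hxU
    refine ⟨i, fun y hy => ?_⟩
    have hyx : ∀ j ∈ Sn (t.sup id), y j = x j := by
      intro j hj
      have : restr (A := A) (Sn (t.sup id)) y = jv := hy
      rw [← hx] at this
      exact congrFun this ⟨j, hj⟩
    exact hi y hyx
  · exact ⟨0, fun y hy => absurd ⟨y, hy⟩ hne⟩

end Refine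
end EntropyAux

namespace EntropyAux
open Filter Set

section CA1
variable {A : Type*}

/-- One-dimensional shift. -/
def shift1 (s : ℤ) (x : Config1 A) : Config1 A := fun i => x (i + s)

lemma shift1_surjective (s : ℤ) : Function.Surjective (shift1 (A := A) s) := by
  intro y
  refine ⟨shift1 (-s) y, funext fun i => ?_⟩
  show y (i + s + -s) = y i
  congr 1
  ring

variable {r : ℕ} {f : (Fin (2 * r + 1) → A) → A} {F : Config1 A → Config1 A}
  (hF : ∀ (x : Config1 A) (i : ℤ), F x i = f fun k => x (i - (r : ℤ) + ((k : ℕ) : ℤ)))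

include hF

lemma F_shift1 (s : ℤ) (x : Config1 A) : F (shift1 s x) = shift1 s (F x) := by
  funext i
  show F (shift1 s x) i = F x (i + s)
  rw [hF, hF]
  congr 1
  funext k
  show x (i - (r : ℤ) + ((k : ℕ) : ℤ) + s) = x (i + s - (r : ℤ) + ((k : ℕ) : ℤ))
  congr 1
  ring

lemma iterate_shift1 (t : ℕ) (s : ℤ) (x : Config1 A) :
    F^[t] (shift1 s x) = shift1 s (F^[t] x) := by
  induction t generalizing x with
  | zero => rfl
  | succ t ih =>
    rw [Function.iterate_succ_apply, Function.iterate_succ_apply, F_shift1 hF, ih]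

lemma lightcone : ∀ (t : ℕ) (a b : ℤ) (x y : Config1 A),
    (∀ j : ℤ, a - (r : ℤ) * t ≤ j → j ≤ b + (r : ℤ) * t → x j = y j) →
    ∀ j : ℤ, a ≤ j → j ≤ b → F^[t] x j = F^[t] y j := by
  intro t
  induction t with
  | zero =>
    intro a b x y h j hj1 hj2
    exact h j (by simpa using hj1) (by simpa using hj2)
  | succ t ih =>
    intro a b x y h j hj1 hj2
    rw [Function.iterate_succ_apply, Function.iterate_succ_apply]
    refine ih a b (F x) (F y) ?_ j hj1 hj2
    intro j' h1 h2
    rw [hF, hF]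
    congr 1
    funext k
    have hk : ((k : ℕ) : ℤ) ≤ 2 * r := by
      have := k.2
      omega
    have hk0 : (0 : ℤ) ≤ ((k : ℕ) : ℤ) := Int.ofNat_nonneg _
    apply h
    · push_cast
      push_cast at h1
      linarith
    · push_cast
      push_cast at h2
      linarith

end CA1
end EntropyAux

namespace EntropyAux
open Filter Set

section Window
variable {A : Type*} [Fintype A]
variable {r : ℕ} {f : (Fin (2 * r + 1) → A) → A} {F : Config1 A → Config1 A}
  (hF : ∀ (x : Config1 A) (i : ℤ), F x i = f fun k => x (i - (r : ℤ) + ((k : ℕ) : ℤ)))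

/-- The partition map given by the window `[a,b]`. -/
noncomputable def q1 (a b : ℤ) : Config1 A → ({j // j ∈ Finset.Icc a b} → A) :=
  restr (Finset.Icc a b)

include hF

/-- Translation invariance of the itinerary counts. -/
lemma ncard_range_itin_translate (a b s : ℤ) (N : ℕ) :
    (Set.range (itin F (q1 (A := A) (a + s) (b + s)) N)).ncard =
      (Set.range (itin F (q1 (A := A) a b) N)).ncard := by
  classical
  set R : (Fin N → ({j // j ∈ Finset.Icc a b} → A)) →
      (Fin N → ({j // j ∈ Finset.Icc (a + s) (b + s)} → A)) :=
    fun θ t j => θ t ⟨j.1 - s, by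
      have hj := j.2
      simp only [Finset.mem_Icc] at hj ⊢
      omega⟩ with hR
  have hfac : itin F (q1 (A := A) (a + s) (b + s)) N =
      R ∘ (itin F (q1 (A := A) a b) N ∘ shift1 s) := by
    funext x
    funext t j
    show F^[(t : ℕ)] x j.1 = F^[(t : ℕ)] (shift1 s x) (j.1 - s)
    rw [iterate_shift1 hF]
    show F^[(t : ℕ)] x j.1 = F^[(t : ℕ)] x (j.1 - s + s)
    congr 1
    ring
  have hRinj : Function.Injective R := by
    intro θ₁ θ₂ hθ
    funext t j
    have hmem : j.1 + s ∈ Finset.Icc (a + s) (b + s) := by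
      have hj := j.2
      simp only [Finset.mem_Icc] at hj ⊢
      omega
    have h2 := congrFun (congrFun hθ t) ⟨j.1 + s, hmem⟩
    simp only [hR, add_sub_cancel_right, Subtype.coe_eta] at h2
    exact h2
  rw [hfac, Set.range_comp, (shift1_surjective s).range_comp]
  exact Set.ncard_image_of_injective _ hRinj

lemma c1_translate (a b s : ℤ) :
    covEnt F (part (q1 (A := A) (a + s) (b + s))) = covEnt F (part (q1 (A := A) a b)) := by
  rw [covEnt_part, covEnt_part]
  congr 1
  funext N
  rw [ncard_range_itin_translate hF]

lemma ncard_range_itin_le [Nonempty A] (a b : ℤ) (N : ℕ) :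
    (Set.range (itin F (q1 (A := A) a b) N)).ncard ≤
      Fintype.card ({j // j ∈ Finset.Icc (a - (r : ℤ) * N) (b + (r : ℤ) * N)} → A) := by
  classical
  set S := Finset.Icc (a - (r : ℤ) * N) (b + (r : ℤ) * N) with hS
  set ext0 : ({j // j ∈ S} → A) → Config1 A :=
    fun z j => if h : j ∈ S then z ⟨j, h⟩ else Classical.arbitrary A with hext
  have hfac : itin F (q1 (A := A) a b) N =
      (itin F (q1 (A := A) a b) N ∘ ext0) ∘ restr S := by
    funext x
    funext t j
    have hj := j.2
    rw [Finset.mem_Icc] at hj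
    show F^[(t : ℕ)] x j.1 = F^[(t : ℕ)] (ext0 (restr S x)) j.1
    apply lightcone hF (t : ℕ) a b
    · intro j' h1 h2
      have hj'S : j' ∈ S := by
        rw [hS, Finset.mem_Icc]
        have ht : ((t : ℕ) : ℤ) ≤ (N : ℤ) := by exact_mod_cast le_of_lt t.2
        have hrt : (r : ℤ) * (t : ℕ) ≤ (r : ℤ) * N :=
          mul_le_mul_of_nonneg_left ht (by positivity)
        constructor <;> linarith
      show x j' = ext0 (restr S x) j'
      simp only [hext, dif_pos hj'S]
      rfl
    · exact hj.1
    · exact hj.2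
  calc (Set.range (itin F (q1 (A := A) a b) N)).ncard
      = (Set.range ((itin F (q1 (A := A) a b) N ∘ ext0) ∘ restr S)).ncard := by rw [← hfac]
    _ ≤ (Set.range (restr (A := A) S)).ncard := ncard_range_comp_le _ _
    _ ≤ _ := ncard_range_le_card _

lemma covEnt_window_le [Nonempty A] {a b : ℤ} (hab : a ≤ b) :
    covEnt F (part (q1 (A := A) a b)) ≤ 2 * (r : ℝ) * Real.log (Fintype.card A) := by
  classical
  rw [covEnt_part]
  set L := Real.log (Fintype.card A) with hL
  have hL0 : 0 ≤ L := Real.log_natCast_nonneg _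
  set v : ℕ → ℝ := fun N => ((b : ℝ) - a + 1 + 2 * r * N) * L / N with hv
  have h0 : ∀ N : ℕ, 0 ≤ Real.log ((Set.range (itin F (q1 (A := A) a b) N)).ncard) / N :=
    fun N => div_nonneg (Real.log_natCast_nonneg _) (Nat.cast_nonneg _)
  have hev : ∀ N : ℕ, Real.log ((Set.range (itin F (q1 (A := A) a b) N)).ncard) / N ≤ v N := by
    intro N
    have hcard : ((Finset.Icc (a - (r : ℤ) * N) (b + (r : ℤ) * N)).card : ℝ) =
        (b : ℝ) - a + 1 + 2 * r * N := by
      rw [Int.card_Icc]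
      have h1 : b + (r : ℤ) * N + 1 - (a - (r : ℤ) * N) = b - a + 1 + 2 * (r : ℤ) * N := by
        ring
      have h2 : (0:ℤ) ≤ (r : ℤ) * N := by positivity
      have h3 : (0:ℤ) ≤ b - a + 1 + 2 * (r : ℤ) * N := by linarith
      rw [h1]
      have h5 : (((b - a + 1 + 2 * (r : ℤ) * N).toNat : ℕ) : ℝ) =
          ((b - a + 1 + 2 * (r : ℤ) * N : ℤ) : ℝ) := by
        exact_mod_cast congrArg (fun z : ℤ => (z : ℝ)) (Int.toNat_of_nonneg h3)
      rw [h5]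
      push_cast
      ring
    have hle : (Set.range (itin F (q1 (A := A) a b) N)).ncard ≤
        Fintype.card A ^ (Finset.Icc (a - (r : ℤ) * N) (b + (r : ℤ) * N)).card :=
      (ncard_range_itin_le hF a b N).trans_eq (by rw [Fintype.card_fun, Fintype.card_coe])
    rcases Nat.eq_zero_or_pos N with hN | hN
    · subst hN
      simp [hv]
    · have hlog : Real.log ((Set.range (itin F (q1 (A := A) a b) N)).ncard) ≤
          ((b : ℝ) - a + 1 + 2 * r * N) * L := by
        refine (log_nat_mono hle).trans ?_
        rw [Nat.cast_pow, Real.log_pow, ← hL, hcard]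
      exact (div_le_div_iff_of_pos_right (by exact_mod_cast hN : (0:ℝ) < N)).2 hlog
  have hT : Tendsto v atTop (nhds (2 * (r : ℝ) * L)) := by
    have hT0 : Tendsto (fun N : ℕ => ((b:ℝ) - a + 1) * L / N + 2 * r * L) atTop
        (nhds (0 + 2 * r * L)) :=
      (tendsto_const_div_atTop_nhds_zero_nat (((b:ℝ) - a + 1) * L)).add tendsto_const_nhds
    rw [zero_add] at hT0
    apply hT0.congr'
    filter_upwards [eventually_ge_atTop 1] with N hN
    have hNne : (N : ℝ) ≠ 0 := Nat.cast_ne_zero.2 (by omega)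
    show ((b:ℝ) - a + 1) * L / N + 2 * r * L = ((b : ℝ) - a + 1 + 2 * r * N) * L / N
    field_simp
  exact limsup_le_of_le_tendsto h0 (Eventually.of_forall hev) hT

end Window
end EntropyAux

namespace EntropyAux
open Filter Set

section Reindex
variable {X J κ : Type*}

lemma part_comp_equiv (q : X → J) (e : J ≃ κ) (i : κ) :
    part (fun x => e (q x)) i = part q (e.symm i) := by
  ext x
  simp [part, Equiv.eq_symm_apply]

lemma covEnt_part_reindex (F : X → X) [Fintype J] [Fintype κ] (q : X → J) (e : J ≃ κ) :
    covEnt F (part (fun x => e (q x))) = covEnt F (part q) := by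
  refine covEnt_congr F (part_cover _) (part_cover _) ?_ ?_
  · intro i
    exact ⟨e.symm i, by rw [part_comp_equiv]⟩
  · intro j
    refine ⟨e j, ?_⟩
    rw [part_comp_equiv, Equiv.symm_apply_apply]

end Reindex

section TopEnt1
variable {A : Type*} [Fintype A] [TopologicalSpace A] [DiscreteTopology A]
variable {r : ℕ} {f : (Fin (2 * r + 1) → A) → A} {F : Config1 A → Config1 A}
  (hF : ∀ (x : Config1 A) (i : ℤ), F x i = f fun k => x (i - (r : ℤ) + ((k : ℕ) : ℤ)))

/-- The set of cover entropies defining `topEnt1`. -/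
def topSet1 (F : Config1 A → Config1 A) : Set ℝ :=
  {x : ℝ | ∃ (m : ℕ) (C : Fin (m + 1) → Set (Config1 A)),
    (∀ i, IsOpen (C i)) ∧ (⋃ i, C i) = Set.univ ∧ x = covEnt F C}

lemma topEnt1_eq_sSup : topEnt1 F = sSup (topSet1 F) := rfl

include hF

lemma mem_topSet1_le [Nonempty A] {x : ℝ} (hx : x ∈ topSet1 F) :
    x ≤ 2 * (r : ℝ) * Real.log (Fintype.card A) := by
  obtain ⟨m, C, hop, hcov, rfl⟩ := hx
  have hmono : Monotone (fun n : ℕ => Finset.Icc (-(n:ℤ)) (n:ℤ)) := by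
    intro a b hab
    apply Finset.Icc_subset_Icc <;> [skip; skip] <;> omega
  have hexh : ∀ j : ℤ, ∃ n : ℕ, j ∈ Finset.Icc (-(n:ℤ)) (n:ℤ) := by
    intro j
    exact ⟨j.natAbs, by rw [Finset.mem_Icc]; omega⟩
  obtain ⟨M, href⟩ := exists_refine _ hmono hexh C hop hcov
  refine le_trans (covEnt_mono F (part_cover _) href) ?_
  exact covEnt_window_le hF (by simp : -(M:ℤ) ≤ (M:ℤ))

lemma topSet1_bddAbove [Nonempty A] : BddAbove (topSet1 F) :=
  ⟨2 * (r : ℝ) * Real.log (Fintype.card A), fun _ hx => mem_topSet1_le hF hx⟩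

omit hF in
lemma zero_mem_topSet1 [Nonempty A] : (0 : ℝ) ∈ topSet1 F := by
  refine ⟨0, fun _ => univ, fun _ => isOpen_univ, by rw [iUnion_const], ?_⟩
  exact (covEnt_of_univ F).symm

lemma topEnt1_nonneg [Nonempty A] : 0 ≤ topEnt1 F :=
  le_csSup (topSet1_bddAbove hF) zero_mem_topSet1

lemma covEnt_window_le_topEnt1 [Nonempty A] (S : Finset ℤ) :
    covEnt F (part (restr (A := A) S)) ≤ topEnt1 F := by
  classical
  set J := ({j // j ∈ S} → A) with hJ
  have hk : 0 < Fintype.card J := Fintype.card_pos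
  set e : J ≃ Fin ((Fintype.card J - 1) + 1) := Fintype.equivFinOfCardEq (by omega) with he
  have hmem : covEnt F (part (fun x => e (restr (A := A) S x))) ∈ topSet1 F := by
    refine ⟨Fintype.card J - 1, part (fun x => e (restr (A := A) S x)), ?_, part_cover _, rfl⟩
    intro i
    rw [part_comp_equiv]
    exact isOpen_part_restr S _
  have := le_csSup (topSet1_bddAbove hF) hmem
  rwa [covEnt_part_reindex] at this

end TopEnt1
end EntropyAux

namespace EntropyAux
open Filter Set

section TwoD
variable {A ι κ J : Type*}

/-- The `i`-th column of a two-dimensional configuration. -/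
def col (i : ℤ) (x : Config A) : Config1 A := fun j => x (i, j)

lemma mem_Esq {n : ℕ} {v : ℤ × ℤ} :
    v ∈ Esq n ↔ (-(n:ℤ) ≤ v.1 ∧ v.1 ≤ n) ∧ (-(n:ℤ) ≤ v.2 ∧ v.2 ≤ n) := by
  rw [Esq, Finset.mem_Icc, Prod.le_def, Prod.le_def]
  tauto

lemma mem_Eband {r n : ℕ} {v : ℤ × ℤ} :
    v ∈ Eband r n ↔ v ∈ Esq n ∧ ¬ v ∈ Esq (n - r) := Finset.mem_sdiff

lemma covBand_part (q : Config A → J) (r n : ℕ) :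
    covBand (part q) r n =
      part (fun x => fun v : {v : ℤ × ℤ // v ∈ Eband r n} => q (shift v.1 x)) := by
  funext g
  ext x
  simp [covBand, part, funext_iff]

lemma covBand_refine {C : ι → Set (Config A)} {D : κ → Set (Config A)}
    (h : ∀ j, ∃ i, D j ⊆ C i) (r n : ℕ) :
    ∀ g, ∃ g', covBand D r n g ⊆ covBand C r n g' := by
  intro g
  choose φ hφ using h
  exact ⟨fun v => φ (g v), Set.iInter_mono fun v => Set.preimage_mono (hφ (g v))⟩

lemma covBand_covers {C : ι → Set (Config A)} (hC : (⋃ i, C i) = univ) (r n : ℕ) :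
    (⋃ g, covBand C r n g) = univ := by
  apply eq_univ_iff_forall.2
  intro x
  have h : ∀ v : {v : ℤ × ℤ // v ∈ Eband r n}, ∃ j, shift v.1 x ∈ C j := by
    intro v
    have := hC ▸ mem_univ (shift v.1 x)
    simpa [mem_iUnion] using this
  choose g hg using h
  exact mem_iUnion.2 ⟨g, mem_iInter.2 fun v => hg v⟩

lemma ERcov_eq_limsup (G : Config A → Config A) [Fintype ι] (C : ι → Set (Config A)) (r : ℕ) :
    ERcov G C r = atTop.limsup (fun n : ℕ => covEnt G (covBand C r n) / n) := rfl

/-- The set of cover entropy rates defining `ERtop`. -/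
def ERset (G : Config A → Config A) (r : ℕ) [TopologicalSpace A] : Set ℝ :=
  {x : ℝ | ∃ (m : ℕ) (C : Fin (m + 1) → Set (Config A)),
    (∀ i, IsOpen (C i)) ∧ (⋃ i, C i) = Set.univ ∧ x = ERcov G C r}

lemma ERtop_eq_sSup (G : Config A → Config A) (r : ℕ) [TopologicalSpace A] :
    ERtop G r = sSup (ERset G r) := rfl

lemma ERcov_part_reindex (G : Config A → Config A) [Fintype J] [Fintype κ]
    (q : Config A → J) (e : J ≃ κ) (r : ℕ) :
    ERcov G (part (fun x => e (q x))) r = ERcov G (part q) r := by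
  rw [ERcov_eq_limsup, ERcov_eq_limsup]
  congr 1
  funext n
  congr 1
  refine covEnt_congr G ?_ ?_ ?_ ?_
  · rw [covBand_part]; exact part_cover _
  · rw [covBand_part]; exact part_cover _
  · exact covBand_refine (fun j => ⟨e.symm j, by rw [part_comp_equiv]⟩) r n
  · exact covBand_refine (fun j => ⟨e j, by rw [part_comp_equiv, Equiv.symm_apply_apply]⟩) r n

section WithCA
variable {r : ℕ} {f : (Fin (2 * r + 1) → A) → A} {F : Config1 A → Config1 A}
  {Fbar : Config A → Config A}
  (hF : ∀ (x : Config1 A) (i : ℤ), F x i = f fun k => x (i - (r : ℤ) + ((k : ℕ) : ℤ)))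
  (hFbar : ∀ (x : Config A) (v : ℤ × ℤ),
      Fbar x v = f fun k => x (v.1, v.2 - (r : ℤ) + ((k : ℕ) : ℤ)))

include hF hFbar

lemma col_Fbar (p1 : ℤ) (x : Config A) : col p1 (Fbar x) = F (col p1 x) := by
  funext j
  show Fbar x (p1, j) = F (col p1 x) j
  rw [hFbar, hF]
  rfl

lemma col_iterate (t : ℕ) (p1 : ℤ) (x : Config A) :
    col p1 (Fbar^[t] x) = F^[t] (col p1 x) := by
  induction t generalizing x with
  | zero => rfl
  | succ t ih =>
    rw [Function.iterate_succ_apply, Function.iterate_succ_apply, ih, col_Fbar hF hFbar]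

lemma Fbar_iterate_apply (t : ℕ) (x : Config A) (p : ℤ × ℤ) :
    Fbar^[t] x p = F^[t] (col p.1 x) p.2 := by
  have h := congrFun (col_iterate hF hFbar t p.1 x) p.2
  simpa [col] using h

end WithCA
end TwoD
end EntropyAux

namespace EntropyAux
open Filter Set

section UpperCore
variable {A : Type*} [Fintype A] [TopologicalSpace A] [DiscreteTopology A] [Nonempty A]
variable {r : ℕ} {f : (Fin (2 * r + 1) → A) → A} {F : Config1 A → Config1 A}
  {Fbar : Config A → Config A}
  (hF : ∀ (x : Config1 A) (i : ℤ), F x i = f fun k => x (i - (r : ℤ) + ((k : ℕ) : ℤ)))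
  (hFbar : ∀ (x : Config A) (v : ℤ × ℤ),
      Fbar x v = f fun k => x (v.1, v.2 - (r : ℤ) + ((k : ℕ) : ℤ)))

lemma band_add_mem₁ {M n : ℕ} (v : {v : ℤ × ℤ // v ∈ Eband r n}) (u : {u : ℤ × ℤ // u ∈ Esq M}) :
    u.1.1 + v.1.1 ∈ Finset.Icc (-((n:ℤ) + M)) ((n:ℤ) + M) := by
  have h1 := (mem_Esq.1 (mem_Eband.1 v.2).1).1
  have h2 := (mem_Esq.1 u.2).1
  rw [Finset.mem_Icc]
  omega

lemma band_add_mem₂ {M n : ℕ} (v : {v : ℤ × ℤ // v ∈ Eband r n}) (u : {u : ℤ × ℤ // u ∈ Esq M}) :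
    u.1.2 + v.1.2 ∈ Finset.Icc (-((n:ℤ) + M)) ((n:ℤ) + M) := by
  have h1 := (mem_Esq.1 (mem_Eband.1 v.2).1).2
  have h2 := (mem_Esq.1 u.2).2
  rw [Finset.mem_Icc]
  omega

include hF hFbar

lemma covEnt_covBand_part_le (M n : ℕ) :
    covEnt Fbar (covBand (part (restr (A := A) (Esq M))) r n) ≤
      ((2 * (n + M) + 1 : ℕ) : ℝ) * topEnt1 F := by
  classical
  set a : ℤ := -((n:ℤ) + M) with ha
  set b : ℤ := (n:ℤ) + M with hb
  set Q : Config A → ({v : ℤ × ℤ // v ∈ Eband r n} → ({u : ℤ × ℤ // u ∈ Esq M} → A)) :=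
    fun x => fun v => restr (Esq M) (shift v.1 x) with hQ
  have hKcard : (Finset.Icc a b).card = 2 * (n + M) + 1 := by
    rw [Int.card_Icc]
    omega
  set K : ℕ := (Finset.Icc a b).card with hK
  -- the per-column itinerary
  set θ : (N : ℕ) → Config1 A → (Fin N → ({j // j ∈ Finset.Icc a b} → A)) :=
    fun N => itin F (q1 (A := A) a b) N with hθ
  -- the combined column itinerary
  set Θ : (N : ℕ) → Config A → ({i // i ∈ Finset.Icc a b} → (Fin N → ({j // j ∈ Finset.Icc a b} → A))) :=
    fun N x i => θ N (col i.1 x) with hΘ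
  have hcount : ∀ N, (Set.range (itin Fbar Q N)).ncard ≤ (Set.range (θ N)).ncard ^ K := by
    intro N
    set h : ({i // i ∈ Finset.Icc a b} → (Fin N → ({j // j ∈ Finset.Icc a b} → A))) →
        (Fin N → ({v : ℤ × ℤ // v ∈ Eband r n} → ({u : ℤ × ℤ // u ∈ Esq M} → A))) :=
      fun Θv t v u => Θv ⟨u.1.1 + v.1.1, band_add_mem₁ v u⟩ t ⟨u.1.2 + v.1.2, band_add_mem₂ v u⟩
      with hh
    have hfac : itin Fbar Q N = h ∘ Θ N := by
      funext x
      funext t v u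
      show Q (Fbar^[(t : ℕ)] x) v u = _
      show shift v.1 (Fbar^[(t : ℕ)] x) u.1 = _
      show Fbar^[(t : ℕ)] x (u.1 + v.1) = _
      rw [Fbar_iterate_apply hF hFbar]
      rfl
    have h1 : (Set.range (itin Fbar Q N)).ncard ≤ (Set.range (Θ N)).ncard := by
      rw [hfac]
      exact ncard_range_comp_le _ _
    have h2 : (Set.range (Θ N)).ncard ≤ (Set.range (θ N)).ncard ^ K := by
      set ψ : ↥(Set.range (Θ N)) → ({i // i ∈ Finset.Icc a b} → ↥(Set.range (θ N))) :=
        fun φ i => ⟨φ.1 i, by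
          obtain ⟨x, hx⟩ := φ.2
          exact ⟨col i.1 x, by rw [← hx]⟩⟩ with hψ
      have hinj : Function.Injective ψ := by
        intro φ₁ φ₂ hφ
        apply Subtype.ext
        funext i
        have := congrFun hφ i
        exact congrArg Subtype.val this
      have := Nat.card_le_card_of_injective ψ hinj
      rwa [Nat.card_coe_set_eq, Nat.card_fun, Nat.card_coe_set_eq,
        Nat.card_eq_finsetCard, ← hK] at this
    exact h1.trans h2
  -- pass to entropies
  rw [covBand_part, covEnt_part]
  have hper : ∀ N, Real.log ((Set.range (itin Fbar Q N)).ncard) / N ≤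
      (K : ℝ) * entSeq F (part (q1 (A := A) a b)) N := by
    intro N
    rw [entSeq_part_eq]
    rcases Nat.eq_zero_or_pos N with hN | hN
    · subst hN
      simp
    · have hlog : Real.log ((Set.range (itin Fbar Q N)).ncard) ≤
          (K : ℝ) * Real.log ((Set.range (θ N)).ncard) := by
        refine (log_nat_mono (hcount N)).trans ?_
        rw [Nat.cast_pow, Real.log_pow]
      rw [← mul_div_assoc]
      exact (div_le_div_iff_of_pos_right (by exact_mod_cast hN : (0:ℝ) < N)).2 hlog
  have hbound := covEnt_window_le_topEnt1 (A := A) hF (Finset.Icc a b)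
  have hc1 : covEnt F (part (q1 (A := A) a b)) = atTop.limsup (entSeq F (part (q1 (A := A) a b))) :=
    covEnt_eq_limsup _ _
  have hlim : atTop.limsup (fun N => Real.log ((Set.range (itin Fbar Q N)).ncard) / (N:ℝ)) ≤
      (K : ℝ) * covEnt F (part (q1 (A := A) a b)) := by
    have hcmul : atTop.limsup (fun N => (K : ℝ) * entSeq F (part (q1 (A := A) a b)) N) =
        (K : ℝ) * covEnt F (part (q1 (A := A) a b)) := by
      rw [hc1]
      exact limsup_cmul (by positivity) (entSeq_nonneg F _)
        (entSeq_le_log_card F (part_cover _))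
    rw [← hcmul]
    refine Filter.limsup_le_limsup (Eventually.of_forall hper) ?_ ?_
    · exact (Filter.isBoundedUnder_of ⟨0, fun N =>
        div_nonneg (Real.log_natCast_nonneg _) (Nat.cast_nonneg _)⟩ :
          Filter.IsBoundedUnder (· ≥ ·) atTop _).isCoboundedUnder_le
    · refine Filter.isBoundedUnder_of ⟨(K : ℝ) * Real.log (Fintype.card
        ({j // j ∈ Finset.Icc a b} → A)), fun N => ?_⟩
      exact mul_le_mul_of_nonneg_left (entSeq_le_log_card F (part_cover _) N)
        (by positivity)
  refine hlim.trans ?_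
  rw [← hKcard]
  exact mul_le_mul_of_nonneg_left hbound (by positivity)

end UpperCore
end EntropyAux

namespace EntropyAux
open Filter Set

section Upper
variable {A : Type*} [Fintype A] [TopologicalSpace A] [DiscreteTopology A] [Nonempty A]
variable {r : ℕ} {f : (Fin (2 * r + 1) → A) → A} {F : Config1 A → Config1 A}
  {Fbar : Config A → Config A}
  (hF : ∀ (x : Config1 A) (i : ℤ), F x i = f fun k => x (i - (r : ℤ) + ((k : ℕ) : ℤ)))
  (hFbar : ∀ (x : Config A) (v : ℤ × ℤ),
      Fbar x v = f fun k => x (v.1, v.2 - (r : ℤ) + ((k : ℕ) : ℤ)))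

lemma Esq_monotone : Monotone Esq := by
  intro p q hpq v hv
  rw [mem_Esq] at hv ⊢
  omega

lemma Esq_exhausts (v : ℤ × ℤ) : ∃ n : ℕ, v ∈ Esq n := by
  refine ⟨v.1.natAbs + v.2.natAbs, ?_⟩
  rw [mem_Esq]
  omega

omit hF hFbar in
lemma zero_mem_ERset (G : Config A → Config A) (r : ℕ) : (0 : ℝ) ∈ ERset G r := by
  refine ⟨0, fun _ => univ, fun _ => isOpen_univ, by rw [iUnion_const], ?_⟩
  rw [ERcov_eq_limsup]
  have h : ∀ n : ℕ, covEnt G (covBand (fun _ : Fin 1 => (univ : Set (Config A))) r n) / n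
      = 0 := by
    intro n
    have hcb : covBand (fun _ : Fin 1 => (univ : Set (Config A))) r n =
        fun _ => (univ : Set (Config A)) := by
      funext g
      simp [covBand]
    rw [hcb, covEnt_of_univ]
    simp
  rw [show (fun n : ℕ => covEnt G (covBand (fun _ : Fin 1 => (univ : Set (Config A))) r n) / n)
    = fun _ : ℕ => (0:ℝ) from funext h]
  exact (Filter.limsup_const 0).symm

include hF hFbar

lemma mem_ERset_le {x : ℝ} (hx : x ∈ ERset Fbar r) : x ≤ 2 * topEnt1 F := by
  obtain ⟨m, C, hop, hcov, rfl⟩ := hx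
  obtain ⟨M, href⟩ := exists_refine Esq Esq_monotone Esq_exhausts C hop hcov
  set H := topEnt1 F with hH
  have hH0 : 0 ≤ H := topEnt1_nonneg hF
  have hper : ∀ n : ℕ, covEnt Fbar (covBand C r n) ≤ ((2 * (n + M) + 1 : ℕ) : ℝ) * H := by
    intro n
    refine le_trans (covEnt_mono Fbar ?_ (covBand_refine href r n)) ?_
    · rw [covBand_part]
      exact part_cover _
    · exact covEnt_covBand_part_le hF hFbar M n
  rw [ERcov_eq_limsup]
  set v : ℕ → ℝ := fun n => ((2 * (n + M) + 1 : ℕ) : ℝ) * H / n with hv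
  have h0 : ∀ n : ℕ, 0 ≤ covEnt Fbar (covBand C r n) / n := fun n =>
    div_nonneg (covEnt_nonneg Fbar (covBand_covers hcov r n)) (Nat.cast_nonneg _)
  have hev : ∀ n : ℕ, covEnt Fbar (covBand C r n) / n ≤ v n := by
    intro n
    rcases Nat.eq_zero_or_pos n with hn | hn
    · subst hn
      simp [hv]
    · exact (div_le_div_iff_of_pos_right (by exact_mod_cast hn : (0:ℝ) < n)).2 (hper n)
  have hT : Tendsto v atTop (nhds (2 * H)) := by
    have hT0 : Tendsto (fun n : ℕ => ((2 * M + 1 : ℝ) * H) / n + 2 * H) atTop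
        (nhds (0 + 2 * H)) :=
      (tendsto_const_div_atTop_nhds_zero_nat ((2 * M + 1 : ℝ) * H)).add tendsto_const_nhds
    rw [zero_add] at hT0
    apply hT0.congr'
    filter_upwards [eventually_ge_atTop 1] with n hn
    have hNne : (n : ℝ) ≠ 0 := Nat.cast_ne_zero.2 (by omega)
    show (2 * M + 1 : ℝ) * H / n + 2 * H = ((2 * (n + M) + 1 : ℕ) : ℝ) * H / n
    push_cast
    field_simp
    ring
  exact limsup_le_of_le_tendsto h0 (Eventually.of_forall hev) hT

lemma ERset_bddAbove : BddAbove (ERset Fbar r) :=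
  ⟨2 * topEnt1 F, fun _ hx => mem_ERset_le hF hFbar hx⟩

end Upper
end EntropyAux

namespace EntropyAux
open Filter Set

section LowerCore
variable {A : Type*} [Fintype A] [TopologicalSpace A] [DiscreteTopology A] [Nonempty A]
variable {r : ℕ} {f : (Fin (2 * r + 1) → A) → A} {F : Config1 A → Config1 A}
  {Fbar : Config A → Config A}
  (hF : ∀ (x : Config1 A) (i : ℤ), F x i = f fun k => x (i - (r : ℤ) + ((k : ℕ) : ℤ)))
  (hFbar : ∀ (x : Config A) (v : ℤ × ℤ),
      Fbar x v = f fun k => x (v.1, v.2 - (r : ℤ) + ((k : ℕ) : ℤ)))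

lemma col_mem_band {n : ℕ} (hr : 1 ≤ r) (hn : 1 ≤ n) (i : ℤ)
    (hi : i ∈ Finset.Icc (-(n:ℤ)) (n:ℤ)) : ((i, (n:ℤ)) : ℤ × ℤ) ∈ Eband r n := by
  rw [Finset.mem_Icc] at hi
  rw [mem_Eband, mem_Esq, mem_Esq]
  omega

lemma shift_mem_EsqM {M n : ℕ} (j : ℤ)
    (hj : j ∈ Finset.Icc (-(M:ℤ) + n) ((M:ℤ) + n)) : ((0:ℤ), j - (n:ℤ)) ∈ Esq M := by
  rw [Finset.mem_Icc] at hj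
  rw [mem_Esq]
  omega

include hF hFbar

lemma lower_core (hr : 1 ≤ r) (M : ℕ) :
    2 * covEnt F (part (q1 (A := A) (-(M:ℤ)) (M:ℤ))) ≤
      ERcov Fbar (part (restr (A := A) (Esq M))) r := by
  classical
  set cM := covEnt F (part (q1 (A := A) (-(M:ℤ)) (M:ℤ))) with hcM
  have hcM0 : 0 ≤ cM := covEnt_nonneg F (part_cover _)
  set H := topEnt1 F with hH
  have hH0 : 0 ≤ H := topEnt1_nonneg hF
  have hper : ∀ n : ℕ, 1 ≤ n →
      ((2 * n + 1 : ℕ) : ℝ) * cM ≤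
        covEnt Fbar (covBand (part (restr (A := A) (Esq M))) r n) := by
    intro n hn
    set a : ℤ := -(M:ℤ) + n with ha
    set b : ℤ := (M:ℤ) + n with hb
    set I : Finset ℤ := Finset.Icc (-(n:ℤ)) (n:ℤ) with hI
    have hIcard : I.card = 2 * n + 1 := by rw [hI, Int.card_Icc]; omega
    set Q : Config A → ({v : ℤ × ℤ // v ∈ Eband r n} → ({u : ℤ × ℤ // u ∈ Esq M} → A)) :=
      fun x => fun v => restr (Esq M) (shift v.1 x) with hQ
    set θ' : (N : ℕ) → Config1 A → (Fin N → ({j // j ∈ Finset.Icc a b} → A)) :=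
      fun N => itin F (q1 (A := A) a b) N with hθ'
    set Θ : (N : ℕ) → Config A → ({i // i ∈ I} → (Fin N → ({j // j ∈ Finset.Icc a b} → A))) :=
      fun N x i => θ' N (col i.1 x) with hΘ
    have hcount : ∀ N, (Set.range (θ' N)).ncard ^ (2 * n + 1) ≤
        (Set.range (itin Fbar Q N)).ncard := by
      intro N
      set h' : (Fin N → ({v : ℤ × ℤ // v ∈ Eband r n} → ({u : ℤ × ℤ // u ∈ Esq M} → A))) →
          ({i // i ∈ I} → (Fin N → ({j // j ∈ Finset.Icc a b} → A))) :=
        fun ψ i t j => ψ t ⟨(i.1, (n:ℤ)), col_mem_band hr hn i.1 i.2⟩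
          ⟨((0:ℤ), j.1 - (n:ℤ)), shift_mem_EsqM j.1 j.2⟩ with hh'
      have hfac : Θ N = h' ∘ itin Fbar Q N := by
        funext x i t j
        have hsum : ((0:ℤ), j.1 - (n:ℤ)) + (i.1, (n:ℤ)) = (i.1, j.1) := by
          rw [Prod.mk_add_mk, zero_add, sub_add_cancel]
        show F^[(t : ℕ)] (col i.1 x) j.1 =
          Fbar^[(t : ℕ)] x (((0:ℤ), j.1 - (n:ℤ)) + (i.1, (n:ℤ)))
        rw [hsum, Fbar_iterate_apply hF hFbar]
      have h1 : (Set.range (Θ N)).ncard ≤ (Set.range (itin Fbar Q N)).ncard := by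
        rw [hfac]
        exact ncard_range_comp_le _ _
      have h2 : (Set.range (θ' N)).ncard ^ (2 * n + 1) ≤ (Set.range (Θ N)).ncard := by
        have hsel : ∀ z : ↥(Set.range (θ' N)), ∃ y : Config1 A, θ' N y = z.1 := fun z => z.2
        choose sel hsel2 using hsel
        set ψ : ({i // i ∈ I} → ↥(Set.range (θ' N))) →
            ({i // i ∈ I} → (Fin N → ({j // j ∈ Finset.Icc a b} → A))) :=
          fun φ => Θ N (fun p : ℤ × ℤ =>
            if h : p.1 ∈ I then sel (φ ⟨p.1, h⟩) p.2 else Classical.arbitrary A) with hψ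
        have hψval : ∀ φ i, ψ φ i = (φ i).1 := by
          intro φ i
          have hcol : col i.1 (fun p : ℤ × ℤ =>
              if h : p.1 ∈ I then sel (φ ⟨p.1, h⟩) p.2 else Classical.arbitrary A) =
              sel (φ i) := by
            funext j
            show (if h : i.1 ∈ I then sel (φ ⟨i.1, h⟩) j else Classical.arbitrary A) =
              sel (φ i) j
            rw [dif_pos i.2, Subtype.coe_eta]
          show θ' N (col i.1 _) = (φ i).1
          rw [hcol, hsel2]
        set ψ' : ({i // i ∈ I} → ↥(Set.range (θ' N))) → ↥(Set.range (Θ N)) :=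
          fun φ => ⟨ψ φ, ⟨_, rfl⟩⟩ with hψ'
        have hinj : Function.Injective ψ' := by
          intro φ₁ φ₂ hφ
          funext i
          apply Subtype.ext
          have h3 := congrFun (congrArg Subtype.val hφ) i
          show (φ₁ i).1 = (φ₂ i).1
          rw [← hψval φ₁ i, ← hψval φ₂ i]
          exact h3
        have hcard := Nat.card_le_card_of_injective ψ' hinj
        rwa [Nat.card_fun, Nat.card_coe_set_eq, Nat.card_coe_set_eq,
          Nat.card_eq_finsetCard, hIcard] at hcard
      exact h2.trans h1
    have hgoal : ((2 * n + 1 : ℕ) : ℝ) * cM ≤ covEnt Fbar (part Q) := by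
      rw [covEnt_part]
      have hperN : ∀ N, ((2 * n + 1 : ℕ) : ℝ) * entSeq F (part (q1 (A := A) a b)) N ≤
          Real.log ((Set.range (itin Fbar Q N)).ncard) / N := by
        intro N
        rw [entSeq_part_eq]
        rcases Nat.eq_zero_or_pos N with hN | hN
        · subst hN
          simp
        · have hlog : ((2 * n + 1 : ℕ) : ℝ) *
              Real.log ((Set.range (itin F (q1 (A := A) a b) N)).ncard) ≤
              Real.log ((Set.range (itin Fbar Q N)).ncard) := by
            refine le_trans ?_ (log_nat_mono (hcount N))
            rw [Nat.cast_pow, Real.log_pow]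
          rw [← mul_div_assoc]
          exact (div_le_div_iff_of_pos_right (by exact_mod_cast hN : (0:ℝ) < N)).2 hlog
      have hcmul : atTop.limsup
          (fun N => ((2 * n + 1 : ℕ) : ℝ) * entSeq F (part (q1 (A := A) a b)) N)
          = ((2 * n + 1 : ℕ) : ℝ) * covEnt F (part (q1 (A := A) a b)) := by
        rw [covEnt_eq_limsup]
        exact limsup_cmul (by positivity) (entSeq_nonneg F _)
          (entSeq_le_log_card F (part_cover _))
      have htrans : covEnt F (part (q1 (A := A) a b)) = cM := by
        rw [hcM, ha, hb]
        exact c1_translate hF (-(M:ℤ)) (M:ℤ) (n:ℤ)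
      rw [← htrans, ← hcmul]
      refine Filter.limsup_le_limsup (Eventually.of_forall hperN) ?_ ?_
      · exact (Filter.isBoundedUnder_of ⟨0, fun N =>
          mul_nonneg (by positivity) (entSeq_nonneg F _ N)⟩ :
            Filter.IsBoundedUnder (· ≥ ·) atTop _).isCoboundedUnder_le
      · refine Filter.isBoundedUnder_of
          ⟨Real.log (Fintype.card ({v : ℤ × ℤ // v ∈ Eband r n} →
            ({u : ℤ × ℤ // u ∈ Esq M} → A))), fun N => ?_⟩
        exact le_of_eq_of_le (entSeq_part_eq Fbar Q N).symm
          (entSeq_le_log_card Fbar (part_cover _) N)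
    calc ((2 * n + 1 : ℕ) : ℝ) * cM ≤ covEnt Fbar (part Q) := hgoal
      _ = covEnt Fbar (covBand (part (restr (A := A) (Esq M))) r n) := by
          rw [covBand_part, ← hQ]
  -- now take the limsup over n
  rw [ERcov_eq_limsup]
  have hB : ∀ n : ℕ, covEnt Fbar (covBand (part (restr (A := A) (Esq M))) r n) / n ≤
      ((2 * M + 3 : ℕ) : ℝ) * H := by
    intro n
    rcases Nat.eq_zero_or_pos n with hn | hn
    · subst hn
      simp only [Nat.cast_zero, div_zero]
      positivity
    · have h1 := covEnt_covBand_part_le (A := A) hF hFbar M n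
      have hnpos : (0:ℝ) < n := by exact_mod_cast hn
      refine le_trans ((div_le_div_iff_of_pos_right hnpos).2 h1) ?_
      rw [div_le_iff₀ hnpos]
      have h2 : ((2 * (n + M) + 1 : ℕ) : ℝ) ≤ ((2 * M + 3 : ℕ) : ℝ) * n := by
        have : (1:ℝ) ≤ (n:ℝ) := by exact_mod_cast hn
        push_cast
        nlinarith
      nlinarith [hH0, h2]
  have hev : ∀ᶠ n in atTop, ((2 * n + 1 : ℕ) : ℝ) * cM / n ≤
      covEnt Fbar (covBand (part (restr (A := A) (Esq M))) r n) / n := by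
    filter_upwards [eventually_ge_atTop 1] with n hn
    exact (div_le_div_iff_of_pos_right (by exact_mod_cast hn : (0:ℝ) < n)).2 (hper n hn)
  have hT : Tendsto (fun n : ℕ => ((2 * n + 1 : ℕ) : ℝ) * cM / n) atTop (nhds (2 * cM)) := by
    have hT0 : Tendsto (fun n : ℕ => (1 : ℝ) * cM / n + 2 * cM) atTop
        (nhds (0 + 2 * cM)) :=
      (tendsto_const_div_atTop_nhds_zero_nat ((1:ℝ) * cM)).add tendsto_const_nhds
    rw [zero_add] at hT0
    apply hT0.congr'
    filter_upwards [eventually_ge_atTop 1] with n hn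
    have hNne : (n : ℝ) ≠ 0 := Nat.cast_ne_zero.2 (by omega)
    show (1:ℝ) * cM / n + 2 * cM = ((2 * n + 1 : ℕ) : ℝ) * cM / n
    push_cast
    field_simp
    ring
  exact le_limsup_of_tendsto_le hB hev hT

end LowerCore
end EntropyAux

namespace EntropyAux
open Filter Set

section EmptyCase
variable {X ι : Type*}

lemma coverNum_of_isEmpty [IsEmpty X] [Fintype ι] (C : ι → Set X) : coverNum C = 0 := by
  have huniv : (univ : Set X) = ∅ := Set.univ_eq_empty_iff.2 ‹_›
  refine Nat.le_zero.1 (Nat.sInf_le ⟨∅, Finset.card_empty, ?_⟩)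
  simp [huniv]

lemma covEnt_of_isEmpty [IsEmpty X] [Fintype ι] (F : X → X) (C : ι → Set X) :
    covEnt F C = 0 := by
  rw [covEnt_eq_limsup]
  have h : ∀ N, entSeq F C N = 0 := by
    intro N
    rw [entSeq, coverNum_of_isEmpty]
    simp
  rw [show entSeq F C = (fun _ : ℕ => (0:ℝ)) from funext h]
  exact Filter.limsup_const 0

end EmptyCase

section EmptyCase2
variable {A : Type*} [Fintype A] [TopologicalSpace A] [DiscreteTopology A] [IsEmpty A]

lemma topEnt1_of_isEmpty (F : Config1 A → Config1 A) : topEnt1 F = 0 := by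
  haveI : IsEmpty (Config1 A) := ⟨fun x => IsEmpty.false (x 0)⟩
  rw [topEnt1_eq_sSup]
  have hset : topSet1 F = {0} := by
    ext x
    simp only [topSet1, mem_setOf_eq, mem_singleton_iff]
    constructor
    · rintro ⟨m, C, _, _, rfl⟩
      exact covEnt_of_isEmpty F C
    · rintro rfl
      exact ⟨0, fun _ => univ, fun _ => isOpen_univ, by rw [iUnion_const],
        (covEnt_of_isEmpty F _).symm⟩
  rw [hset, csSup_singleton]

lemma ERtop_of_isEmpty (G : Config A → Config A) (r : ℕ) : ERtop G r = 0 := by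
  haveI : IsEmpty (Config A) := ⟨fun x => IsEmpty.false (x (0, 0))⟩
  rw [ERtop_eq_sSup]
  have hERzero : ∀ {ι : Type} [Fintype ι] (C : ι → Set (Config A)), ERcov G C r = 0 := by
    intro ι _ C
    rw [ERcov_eq_limsup]
    have h : ∀ n : ℕ, covEnt G (covBand C r n) / n = 0 := by
      intro n
      rw [covEnt_of_isEmpty]
      simp
    rw [show (fun n : ℕ => covEnt G (covBand C r n) / n) = fun _ : ℕ => (0:ℝ) from funext h]
    exact Filter.limsup_const 0
  have hset : ERset G r = {0} := by
    ext x
    simp only [ERset, mem_setOf_eq, mem_singleton_iff]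
    constructor
    · rintro ⟨m, C, _, _, rfl⟩
      exact hERzero C
    · rintro rfl
      exact ⟨0, fun _ => univ, fun _ => isOpen_univ, by rw [iUnion_const], (hERzero _).symm⟩
  rw [hset, csSup_singleton]

end EmptyCase2

section Glue
variable {A : Type*} [Fintype A] [TopologicalSpace A] [DiscreteTopology A] [Nonempty A]
variable {r : ℕ} {f : (Fin (2 * r + 1) → A) → A} {F : Config1 A → Config1 A}
  {Fbar : Config A → Config A}
  (hF : ∀ (x : Config1 A) (i : ℤ), F x i = f fun k => x (i - (r : ℤ) + ((k : ℕ) : ℤ)))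
  (hFbar : ∀ (x : Config A) (v : ℤ × ℤ),
      Fbar x v = f fun k => x (v.1, v.2 - (r : ℤ) + ((k : ℕ) : ℤ)))

include hF hFbar

lemma two_covEnt_le_ERtop {c : ℝ} (hc : c ∈ topSet1 F) : 2 * c ≤ ERtop Fbar r := by
  classical
  have hEbdd : BddAbove (ERset Fbar r) := ERset_bddAbove hF hFbar
  have hE0 : 0 ≤ ERtop Fbar r := le_csSup hEbdd (zero_mem_ERset Fbar r)
  rcases Nat.eq_zero_or_pos r with hr | hr
  · have h1 := mem_topSet1_le hF hc
    rw [hr] at h1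
    simp only [Nat.cast_zero, mul_zero, zero_mul] at h1
    linarith
  · obtain ⟨m, C, hop, hcov, rfl⟩ := hc
    have hmono : Monotone (fun n : ℕ => Finset.Icc (-(n:ℤ)) (n:ℤ)) := by
      intro p q hpq j hj
      rw [Finset.mem_Icc] at hj ⊢
      omega
    have hexh : ∀ j : ℤ, ∃ n : ℕ, j ∈ Finset.Icc (-(n:ℤ)) (n:ℤ) :=
      fun j => ⟨j.natAbs, by rw [Finset.mem_Icc]; omega⟩
    obtain ⟨M, href⟩ := exists_refine _ hmono hexh C hop hcov
    have h1 : covEnt F C ≤ covEnt F (part (q1 (A := A) (-(M:ℤ)) (M:ℤ))) :=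
      covEnt_mono F (part_cover _) href
    have h2 := lower_core hF hFbar hr M
    have h3 : ERcov Fbar (part (restr (A := A) (Esq M))) r ≤ ERtop Fbar r := by
      have hk : 0 < Fintype.card ({u : ℤ × ℤ // u ∈ Esq M} → A) := Fintype.card_pos
      set e : ({u : ℤ × ℤ // u ∈ Esq M} → A) ≃
          Fin ((Fintype.card ({u : ℤ × ℤ // u ∈ Esq M} → A) - 1) + 1) :=
        Fintype.equivFinOfCardEq (by omega) with he
      have hmem : ERcov Fbar (part (fun x => e (restr (A := A) (Esq M) x))) r ∈
          ERset Fbar r := by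
        refine ⟨_, part (fun x => e (restr (A := A) (Esq M) x)), ?_, part_cover _, rfl⟩
        intro i
        rw [part_comp_equiv]
        exact isOpen_part_restr _ _
      have h4 := le_csSup hEbdd hmem
      rwa [ERcov_part_reindex] at h4
    linarith

end Glue
end EntropyAux

open EntropyAux

/-- Let `F` be a one-dimensional CA on `A^ℤ` with local map
`f : A^{2r+1} → A`, and let `F̄` be its extension to dimension 2, defined by
`F̄(x)_{(i,j)} = f(x_{(i,j-r)},…,x_{(i,j+r)})`.  Then
`ER(A^{ℤ²},F̄) = 2·h(A^ℤ,F)`. -/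
theorem topEntropyRate_extension_of_oneDim {A : Type*} [Fintype A]
    [TopologicalSpace A] [DiscreteTopology A]
    (r : ℕ) (f : (Fin (2 * r + 1) → A) → A)
    (F : Config1 A → Config1 A)
    (hF : ∀ (x : Config1 A) (i : ℤ), F x i = f fun k => x (i - (r : ℤ) + ((k : ℕ) : ℤ)))
    (Fbar : Config A → Config A)
    (hFbar : ∀ (x : Config A) (v : ℤ × ℤ),
      Fbar x v = f fun k => x (v.1, v.2 - (r : ℤ) + ((k : ℕ) : ℤ))) :
    ERtop Fbar r = 2 * topEnt1 F := by
  classical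
  rcases isEmpty_or_nonempty A with hA | hA
  · rw [ERtop_of_isEmpty, topEnt1_of_isEmpty]
    norm_num
  · apply le_antisymm
    · refine Real.sSup_le (fun x hx => mem_ERset_le hF hFbar hx) ?_
      have h0 := topEnt1_nonneg (F := F) hF
      linarith
    · have hE0 : 0 ≤ ERtop Fbar r :=
        le_csSup (ERset_bddAbove hF hFbar) (zero_mem_ERset Fbar r)
      have hkey : ∀ c ∈ topSet1 F, c ≤ ERtop Fbar r / 2 := by
        intro c hc
        have := two_covEnt_le_ERtop hF hFbar hc
        linarith
      have h2 : sSup (topSet1 (A := A) F) ≤ ERtop Fbar r / 2 := Real.sSup_le hkey (by linarith)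
      have h3 : topEnt1 F ≤ ERtop Fbar r / 2 := h2
      linarith
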